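/- Let W₁, W₂, T be symmetric positive definite real n×n matrices and α ≥ 1 a real parameter. Then the iteration matrix of Method III, B = (αT - iW₁)^{-1}((α-1)T - iW₂)(αT + iW₂)^{-1}((α-1)T + iW₁), satisfies ‖B‖-type eigenvalue bound: every eigenvalue λ of B obeys |λ| ≤ sqrt( ((α-1)² + ‖Ŵ₂‖²)/(α² + ‖Ŵ₂‖²) ) · sqrt( ((α-1)² + ‖Ŵ₁‖²)/(α² + ‖Ŵ₁‖²) ) < 1, where Ŵⱼ = T^{-1/2} Wⱼ T^{-1/2}. -/

import Mathlib

open scoped Matrix.Norms.L2Operator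

/-- complexification of a real matrix -/
def Matrix.cplx {n : ℕ} (A : Matrix (Fin n) (Fin n) ℝ) : Matrix (Fin n) (Fin n) ℂ :=
  A.map Complex.ofReal

/-- `Ŵ = T^{-1/2} W T^{-1/2}` -/
noncomputable def Matrix.hatW {n : ℕ} (T : Matrix (Fin n) (Fin n) ℝ) (hT : T.PosDef)
    (W : Matrix (Fin n) (Fin n) ℝ) : Matrix (Fin n) (Fin n) ℝ :=
  (hT.posSemidef.1.eigenvectorUnitary.1 *
      Matrix.diagonal ((RCLike.ofReal : ℝ → ℝ) ∘ Real.sqrt ∘ hT.posSemidef.1.eigenvalues) *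
      (star hT.posSemidef.1.eigenvectorUnitary : Matrix (Fin n) (Fin n) ℝ))⁻¹ * W *
    (hT.posSemidef.1.eigenvectorUnitary.1 *
      Matrix.diagonal ((RCLike.ofReal : ℝ → ℝ) ∘ Real.sqrt ∘ hT.posSemidef.1.eigenvalues) *
      (star hT.posSemidef.1.eigenvectorUnitary : Matrix (Fin n) (Fin n) ℝ))⁻¹

/-!
With `S = T^{1/2}` we have `T = S S` and `Wⱼ = S Ŵⱼ S`, so every factor of `B` has the form
`S (c + d Ŵⱼ) S` and `B` is similar to `C₂ C₁`, where
`C₁ = ((α - 1) + iŴ₁)(α - iŴ₁)⁻¹` and `C₂ = ((α - 1) - iŴ₂)(α + iŴ₂)⁻¹`.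
Each `Cⱼ` is a rational function of the symmetric matrix `Ŵⱼ`, so by the continuous functional
calculus its norm is at most the maximum of `|(α - 1 + ix)/(α - ix)|` over the real spectrum
of `Ŵⱼ`, which lies in `[-‖Ŵⱼ‖, ‖Ŵⱼ‖]`. This modulus grows with `|x|` and stays below `1`
since `α > 1/2`, and the spectral radius of `B` is at most `‖C₂‖ ‖C₁‖`.
-/

open Complex

noncomputable def contractionFactor (α w : ℝ) : ℝ :=
  √(((α - 1) ^ 2 + w ^ 2) / (α ^ 2 + w ^ 2))

lemma contractionFactor_nonneg (α w : ℝ) : 0 ≤ contractionFactor α w := Real.sqrt_nonneg _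

lemma contractionFactor_mono {α x w : ℝ} (hα : 1 / 2 ≤ α) (hxw : |x| ≤ w) :
    contractionFactor α x ≤ contractionFactor α w := by
  have hx : x ^ 2 ≤ w ^ 2 := sq_le_sq' (neg_le_of_abs_le hxw) (le_of_abs_le hxw)
  refine Real.sqrt_le_sqrt ?_
  rw [div_le_div_iff₀ (by positivity) (by positivity)]
  nlinarith

lemma contractionFactor_lt_one {α : ℝ} (hα : 1 / 2 < α) (w : ℝ) :
    contractionFactor α w < 1 := by
  rw [contractionFactor, Real.sqrt_lt' one_pos, one_pow, div_lt_one (by positivity)]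
  nlinarith

lemma norm_cayley_eq (α x : ℝ) :
    ‖((α : ℂ) - 1 + I * x) * ((α : ℂ) - I * x)⁻¹‖ = contractionFactor α x := by
  have h₁ : (α : ℂ) - 1 + I * x = ((α - 1 : ℝ) : ℂ) + (x : ℝ) * I := by push_cast; ring
  have h₂ : (α : ℂ) - I * x = (α : ℝ) + ((-x : ℝ) : ℂ) * I := by push_cast; ring
  rw [norm_mul, norm_inv, h₁, h₂, norm_add_mul_I, norm_add_mul_I, contractionFactor,
    Real.sqrt_div' _ (by positivity), div_eq_mul_inv, neg_sq]

section CayleyFactor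

variable {A : Type*} [CStarAlgebra A] {a : A}

lemma norm_le_norm_of_mem_spectrum {z : ℂ} (hz : z ∈ spectrum ℂ a) : ‖z‖ ≤ ‖a‖ := by
  have : Nontrivial A := (subsingleton_or_nontrivial A).resolve_left fun _ => by
    simp [spectrum.of_subsingleton] at hz
  exact spectrum.norm_le_norm_of_mem hz

lemma IsSelfAdjoint.cfc_const_sub_I_mul (ha : IsSelfAdjoint a) (c : ℂ) :
    cfc (fun z => c - I * z) a = c • 1 - I • a := by
  rw [cfc_sub (fun _ => c) (I * ·) a, cfc_const c a, cfc_const_mul_id I a,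
    Algebra.algebraMap_eq_smul_one]

lemma IsSelfAdjoint.cfc_const_add_I_mul (ha : IsSelfAdjoint a) (c : ℂ) :
    cfc (fun z => c + I * z) a = c • 1 + I • a := by
  rw [cfc_const_add c (I * ·) a, cfc_const_mul_id I a, Algebra.algebraMap_eq_smul_one]

lemma IsSelfAdjoint.const_sub_I_mul_ne_zero (ha : IsSelfAdjoint a) {α : ℝ} (hα : α ≠ 0)
    {z : ℂ} (hz : z ∈ spectrum ℂ a) : (α : ℂ) - I * z ≠ 0 := by
  rw [ha.mem_spectrum_eq_re hz]
  intro h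
  simpa [hα] using congrArg re h

lemma IsSelfAdjoint.isUnit_smul_one_sub_I_smul (ha : IsSelfAdjoint a) {α : ℝ} (hα : α ≠ 0) :
    IsUnit ((α : ℂ) • (1 : A) - I • a) := by
  rw [← ha.cfc_const_sub_I_mul]
  exact (isUnit_cfc_iff _ a).mpr fun z hz => ha.const_sub_I_mul_ne_zero hα hz

lemma IsSelfAdjoint.norm_cayley_le (ha : IsSelfAdjoint a) {α w : ℝ} (hα : 1 / 2 ≤ α)
    (hw : ‖a‖ ≤ w) :
    ‖(((α : ℂ) - 1) • (1 : A) + I • a) * Ring.inverse ((α : ℂ) • (1 : A) - I • a)‖ ≤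
      contractionFactor α w := by
  have hα₀ : α ≠ 0 := by positivity
  have hne : ∀ z ∈ spectrum ℂ a, (α : ℂ) - I * z ≠ 0 := fun z hz =>
    ha.const_sub_I_mul_ne_zero hα₀ hz
  rw [← ha.cfc_const_add_I_mul, ← ha.cfc_const_sub_I_mul, ← cfc_inv _ a hne,
    ← cfc_mul _ (fun z => ((α : ℂ) - I * z)⁻¹) a
      (hg := (by fun_prop : Continuous _).continuousOn.inv₀ hne)]
  refine norm_cfc_le (contractionFactor_nonneg α w) fun z hz => ?_
  rw [ha.mem_spectrum_eq_re hz, norm_cayley_eq]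
  refine contractionFactor_mono hα ?_
  calc |z.re| = ‖z‖ := by
        rw [← Real.norm_eq_abs, ← Complex.norm_real, ← ha.mem_spectrum_eq_re hz]
    _ ≤ ‖a‖ := norm_le_norm_of_mem_spectrum hz
    _ ≤ w := hw

lemma IsSelfAdjoint.norm_cayley_conj_le (ha : IsSelfAdjoint a) {α w : ℝ} (hα : 1 / 2 ≤ α)
    (hw : ‖a‖ ≤ w) :
    ‖(((α : ℂ) - 1) • (1 : A) - I • a) * Ring.inverse ((α : ℂ) • (1 : A) + I • a)‖ ≤
      contractionFactor α w := by
  simpa [sub_eq_add_neg] using ha.neg.norm_cayley_le hα (by rwa [norm_neg])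

end CayleyFactor

lemma smul_mul_self_add_smul_mul_mul {R A : Type*} [CommSemiring R] [Semiring A] [Algebra R A]
    (c d : R) (s h : A) : c • (s * s) + d • (s * h * s) = s * (c • 1 + d • h) * s := by
  simp only [mul_add, add_mul, mul_smul_comm, smul_mul_assoc, mul_one, mul_assoc]

lemma smul_mul_self_sub_smul_mul_mul {R A : Type*} [CommSemiring R] [Ring A] [Algebra R A]
    (c d : R) (s h : A) : c • (s * s) - d • (s * h * s) = s * (c • 1 - d • h) * s := by
  simp only [mul_sub, sub_mul, mul_smul_comm, smul_mul_assoc, mul_one, mul_assoc]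

namespace Matrix

variable {m K : Type*} [Fintype m] [DecidableEq m] [CommRing K]

lemma spectrum_nonsing_inv_mul_mul {P : Matrix m m K} (hP : IsUnit P) (M : Matrix m m K) :
    spectrum K (P⁻¹ * M * P) = spectrum K M := by
  lift P to (Matrix m m K)ˣ using hP
  rw [← coe_units_inv]
  exact spectrum.units_conjugate'

lemma congr_inv_mul_mul_inv_mul_eq {S N₁ N₂ A₁ A₂ : Matrix m m K} (hS : IsUnit S)
    (hN₁ : IsUnit N₁) :
    (S * N₁ * S)⁻¹ * (S * A₂ * S) * (S * N₂ * S)⁻¹ * (S * A₁ * S) =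
      (N₁ * S)⁻¹ * (A₂ * N₂⁻¹ * (A₁ * N₁⁻¹)) * (N₁ * S) := by
  have hS' := (isUnit_iff_isUnit_det S).mp hS
  have hN₁' := (isUnit_iff_isUnit_det N₁).mp hN₁
  simp only [mul_inv_rev, Matrix.mul_assoc, nonsing_inv_mul_cancel_left _ _ hS',
    mul_nonsing_inv_cancel_left _ _ hS', nonsing_inv_mul_cancel_left _ _ hN₁']

end Matrix

namespace Matrix

open scoped ComplexOrder

variable {m 𝕜 : Type*} [Fintype m] [DecidableEq m] [RCLike 𝕜] {T : Matrix m m 𝕜}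

lemma PosSemidef.cfc_sqrt_mul_self (hT : T.PosSemidef) :
    cfc Real.sqrt T * cfc Real.sqrt T = T := by
  have hsq : Set.EqOn (fun x => √x * √x) id (spectrum ℝ T) := fun x hx => by
    obtain ⟨i, rfl⟩ := hT.isHermitian.spectrum_real_eq_range_eigenvalues ▸ hx
    exact Real.mul_self_sqrt (hT.eigenvalues_nonneg i)
  rw [← cfc_mul Real.sqrt Real.sqrt T, cfc_congr hsq]
  exact cfc_id ℝ T hT.isHermitian

lemma PosDef.isUnit_cfc_sqrt (hT : T.PosDef) : IsUnit (cfc Real.sqrt T) := by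
  refine (isUnit_cfc_iff _ T (ha := hT.isHermitian)).mpr fun x hx => ?_
  obtain ⟨i, rfl⟩ := hT.isHermitian.spectrum_real_eq_range_eigenvalues ▸ hx
  exact (Real.sqrt_pos.mpr (hT.eigenvalues_pos i)).ne'

end Matrix

namespace Matrix

variable {n : ℕ} {T W : Matrix (Fin n) (Fin n) ℝ}

lemma hatW_eq (hT : T.PosDef) (W : Matrix (Fin n) (Fin n) ℝ) :
    T.hatW hT W = (cfc Real.sqrt T)⁻¹ * W * (cfc Real.sqrt T)⁻¹ := by
  rw [hT.isHermitian.cfc_eq, IsHermitian.cfc, Unitary.conjStarAlgAut_apply]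
  rfl

lemma cfc_sqrt_mul_hatW_mul (hT : T.PosDef) (W : Matrix (Fin n) (Fin n) ℝ) :
    cfc Real.sqrt T * T.hatW hT W * cfc Real.sqrt T = W := by
  have := (isUnit_iff_isUnit_det _).mp hT.isUnit_cfc_sqrt
  rw [hatW_eq, ← Matrix.mul_assoc, ← Matrix.mul_assoc, mul_nonsing_inv _ this, Matrix.one_mul,
    Matrix.mul_assoc, nonsing_inv_mul _ this, Matrix.mul_one]

lemma isHermitian_hatW (hT : T.PosDef) (hW : W.IsHermitian) : (T.hatW hT W).IsHermitian := by
  have hR : (cfc Real.sqrt T)⁻¹.IsHermitian := (cfc_predicate Real.sqrt T).isHermitian.inv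
  rw [hatW_eq]
  have := isHermitian_conjTranspose_mul_mul (cfc Real.sqrt T)⁻¹ hW
  rwa [hR.eq] at this

end Matrix

namespace Matrix

variable {n : ℕ}

lemma cplx_mul (A B : Matrix (Fin n) (Fin n) ℝ) : (A * B).cplx = A.cplx * B.cplx :=
  Matrix.map_mul (f := ofRealHom)

lemma _root_.IsUnit.cplx {A : Matrix (Fin n) (Fin n) ℝ} (hA : IsUnit A) : IsUnit A.cplx :=
  hA.map ofRealHom.mapMatrix

lemma IsHermitian.isSelfAdjoint_cplx {A : Matrix (Fin n) (Fin n) ℝ} (hA : A.IsHermitian) :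
    IsSelfAdjoint A.cplx :=
  hA.map _ fun x => (conj_ofReal x).symm

lemma _root_.EuclideanSpace.norm_sq_eq_norm_sq_re_add_norm_sq_im {ι : Type*} [Fintype ι]
    (x : EuclideanSpace ℂ ι) :
    ‖x‖ ^ 2 =
      ‖WithLp.toLp 2 (fun i => (x i).re)‖ ^ 2 + ‖WithLp.toLp 2 (fun i => (x i).im)‖ ^ 2 := by
  simp only [EuclideanSpace.norm_sq_eq, ← Finset.sum_add_distrib, Complex.sq_norm,
    Complex.normSq_apply, Real.norm_eq_abs, sq_abs]
  simp [sq]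

lemma re_cplx_mulVec (A : Matrix (Fin n) (Fin n) ℝ) (x : Fin n → ℂ) (i : Fin n) :
    ((A.cplx *ᵥ x) i).re = (A *ᵥ fun j => (x j).re) i := by
  simp [mulVec, dotProduct, cplx, Complex.re_sum]

lemma im_cplx_mulVec (A : Matrix (Fin n) (Fin n) ℝ) (x : Fin n → ℂ) (i : Fin n) :
    ((A.cplx *ᵥ x) i).im = (A *ᵥ fun j => (x j).im) i := by
  simp [mulVec, dotProduct, cplx, Complex.im_sum]

lemma norm_cplx_le (A : Matrix (Fin n) (Fin n) ℝ) : ‖A.cplx‖ ≤ ‖A‖ := by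
  rw [← l2_opNorm_toEuclideanCLM, ← l2_opNorm_toEuclideanCLM]
  set L := toEuclideanCLM (n := Fin n) (𝕜 := ℝ) A
  refine ContinuousLinearMap.opNorm_le_bound _ (norm_nonneg L) fun x => ?_
  set u : EuclideanSpace ℝ (Fin n) := WithLp.toLp 2 fun j => (x j).re
  set v : EuclideanSpace ℝ (Fin n) := WithLp.toLp 2 fun j => (x j).im
  set y := toEuclideanCLM (n := Fin n) (𝕜 := ℂ) A.cplx x
  have hre : (WithLp.toLp 2 fun i => (y i).re) = L u := by
    ext i; exact re_cplx_mulVec A x i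
  have him : (WithLp.toLp 2 fun i => (y i).im) = L v := by
    ext i; exact im_cplx_mulVec A x i
  refine (sq_le_sq₀ (norm_nonneg _) (by positivity)).mp ?_
  calc ‖y‖ ^ 2 = ‖L u‖ ^ 2 + ‖L v‖ ^ 2 := by
          rw [EuclideanSpace.norm_sq_eq_norm_sq_re_add_norm_sq_im, hre, him]
    _ ≤ (‖L‖ * ‖u‖) ^ 2 + (‖L‖ * ‖v‖) ^ 2 := by
          gcongr <;> exact L.le_opNorm _
    _ = (‖L‖ * ‖x‖) ^ 2 := by
          rw [mul_pow, mul_pow, mul_pow, EuclideanSpace.norm_sq_eq_norm_sq_re_add_norm_sq_im x]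
          ring

end Matrix

/-- eigenvalue bound for the Method III iteration matrix
`B = (αT - iW₁)⁻¹ ((α-1)T - iW₂) (αT + iW₂)⁻¹ ((α-1)T + iW₁)`, `α ≥ 1`. -/
theorem stmt_7 {n : ℕ} (W₁ W₂ T : Matrix (Fin n) (Fin n) ℝ)
    (hW₁ : W₁.PosDef) (hW₂ : W₂.PosDef) (hT : T.PosDef)
    (α : ℝ) (hα : 1 ≤ α)
    (B : Matrix (Fin n) (Fin n) ℂ)
    (hB : B = ((α : ℂ) • T.cplx - Complex.I • W₁.cplx)⁻¹ *
      (((α : ℂ) - 1) • T.cplx - Complex.I • W₂.cplx) *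
      ((α : ℂ) • T.cplx + Complex.I • W₂.cplx)⁻¹ *
      (((α : ℂ) - 1) • T.cplx + Complex.I • W₁.cplx)) :
    (∀ lam ∈ spectrum ℂ B,
      ‖lam‖ ≤ Real.sqrt (((α - 1) ^ 2 + ‖T.hatW hT W₂‖ ^ 2) / (α ^ 2 + ‖T.hatW hT W₂‖ ^ 2)) *
        Real.sqrt (((α - 1) ^ 2 + ‖T.hatW hT W₁‖ ^ 2) / (α ^ 2 + ‖T.hatW hT W₁‖ ^ 2))) ∧
    Real.sqrt (((α - 1) ^ 2 + ‖T.hatW hT W₂‖ ^ 2) / (α ^ 2 + ‖T.hatW hT W₂‖ ^ 2)) *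
      Real.sqrt (((α - 1) ^ 2 + ‖T.hatW hT W₁‖ ^ 2) / (α ^ 2 + ‖T.hatW hT W₁‖ ^ 2)) < 1 := by
  have hα' : 1 / 2 < α := by linarith
  refine ⟨fun lam hlam => ?_, mul_lt_one_of_nonneg_of_lt_one_left (contractionFactor_nonneg _ _)
    (contractionFactor_lt_one hα' _) (contractionFactor_lt_one hα' _).le⟩
  set S := (cfc Real.sqrt T).cplx
  set H₁ := (T.hatW hT W₁).cplx
  have hH₁ := (Matrix.isHermitian_hatW hT hW₁.isHermitian).isSelfAdjoint_cplx
  have hH₂ := (Matrix.isHermitian_hatW hT hW₂.isHermitian).isSelfAdjoint_cplx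
  have hS : IsUnit S := hT.isUnit_cfc_sqrt.cplx
  have hN₁ : IsUnit ((α : ℂ) • 1 - I • H₁) :=
    hH₁.isUnit_smul_one_sub_I_smul (by positivity)
  have hTS : T.cplx = S * S := by rw [← Matrix.cplx_mul, hT.posSemidef.cfc_sqrt_mul_self]
  have hWS (W : Matrix (Fin n) (Fin n) ℝ) : W.cplx = S * (T.hatW hT W).cplx * S := by
    rw [← Matrix.cplx_mul, ← Matrix.cplx_mul, Matrix.cfc_sqrt_mul_hatW_mul]
  rw [hB, hTS, hWS W₁, hWS W₂, smul_mul_self_add_smul_mul_mul, smul_mul_self_add_smul_mul_mul,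
    smul_mul_self_sub_smul_mul_mul, smul_mul_self_sub_smul_mul_mul,
    Matrix.congr_inv_mul_mul_inv_mul_eq hS hN₁,
    Matrix.spectrum_nonsing_inv_mul_mul (hN₁.mul hS)] at hlam
  simp only [Matrix.nonsing_inv_eq_ringInverse] at hlam
  calc ‖lam‖ ≤ _ := norm_le_norm_of_mem_spectrum hlam
    _ ≤ _ := norm_mul_le _ _
    _ ≤ _ := mul_le_mul (hH₂.norm_cayley_conj_le hα'.le (Matrix.norm_cplx_le _))
        (hH₁.norm_cayley_le hα'.le (Matrix.norm_cplx_le _)) (norm_nonneg _)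
        (contractionFactor_nonneg _ _)
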